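/- Let P be a probability measure on R^d with continuous density p, fix a point x in the support of p, and let ε_k(x) be twice the ∞-norm distance from x to its k-th nearest neighbor among N−1 i.i.d. samples from P. With p_r(x) = P(B(x; r/2)) denoting the mass of the ∞-norm ball of radius r/2 around x, the expectation satisfies E[log p_{ε_k(x)}(x)] = ψ(k) − ψ(N). -/

import Mathlib

/-!
Write `R` for the `k`-NN radius of `x` among the `m = N - 1` samples and `F r = P(B(x; r))`.
Since `P` has a density, sup-norm spheres are `P`-null, so `F` is continuous and `F R ≤ u` holds
exactly when at least `k` samples fall in a closed ball of mass `u`. Hence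
`P(F R ≤ u) = ∑_{j ≥ k} C(m, j) u^j (1 - u)^(m - j)`, and writing `-log y = ∫_y^1 du / u` and
swapping the integrals gives
`E[-log F R] = ∑_{j=k}^{m} C(m, j) B(j, m - j + 1) = ∑_{j=k}^{m} 1 / j`,
which is `ψ(N) - ψ(k)` by the recurrence `ψ(x + 1) = ψ(x) + 1 / x`.
-/

open MeasureTheory Real Filter
open scoped Classical ENNReal Topology

noncomputable section

/-- The digamma function `ψ(x) = Γ'(x) / Γ(x)`. -/
def digamma (x : ℝ) : ℝ := deriv Real.Gamma x / Real.Gamma x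

/-- The unit cube `[0,1]^d` in `ℝ^d`. -/
def unitCube (d : ℕ) : Set (Fin d → ℝ) := Set.univ.pi fun _ => Set.Icc (0:ℝ) 1

/-- The `ℓ¹`-norm of the gradient of `p` at `x`. -/
def gradL1Norm {d : ℕ} (p : (Fin d → ℝ) → ℝ) (x : Fin d → ℝ) : ℝ :=
  ∑ j : Fin d, |fderiv ℝ p x (Pi.single j 1)|

/-- The differential entropy `H(X) = -∫ p log p` of a density `p`. -/
def diffEntropy {d : ℕ} (p : (Fin d → ℝ) → ℝ) : ℝ :=
  - ∫ x, p x * Real.log (p x)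

/-- The distance (in the sup-norm) from a query point `x` to its `k`-th nearest
neighbor among the sample points `s 0, ..., s (m-1)`. -/
def kNNradius {d m : ℕ} (k : ℕ) (x : Fin d → ℝ) (s : Fin m → (Fin d → ℝ)) : ℝ :=
  sInf {r : ℝ | 0 ≤ r ∧ k ≤ (Finset.univ.filter (fun i => dist x (s i) ≤ r)).card}

/-- Twice the `k`-NN distance of a query point `x` among sample points `s`. -/
def twiceKNNdist {d m : ℕ} (k : ℕ) (x : Fin d → ℝ) (s : Fin m → (Fin d → ℝ)) : ℝ :=
  2 * kNNradius k x s

/-- The leave-one-out `k`-NN distance of `xs i` among the other samples. -/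
def kNNradiusLoo {d N : ℕ} (k : ℕ) (xs : Fin N → (Fin d → ℝ)) (i : Fin N) : ℝ :=
  sInf {r : ℝ | 0 ≤ r ∧ k ≤ (Finset.univ.filter (fun j => j ≠ i ∧ dist (xs i) (xs j) ≤ r)).card}

/-- `ε_i`: twice the leave-one-out `k`-NN distance of sample `i`. -/
def epsKL {d N : ℕ} (k : ℕ) (xs : Fin N → (Fin d → ℝ)) (i : Fin N) : ℝ :=
  2 * kNNradiusLoo k xs i

/-- `ξ_{i,j} = min(x_j^{(i)} + ε_i/2, 1) - max(x_j^{(i)} - ε_i/2, 0)`. -/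
def xiTKL {d N : ℕ} (k : ℕ) (xs : Fin N → (Fin d → ℝ)) (i : Fin N) (j : Fin d) : ℝ :=
  min (xs i j + epsKL k xs i / 2) 1 - max (xs i j - epsKL k xs i / 2) 0

/-- The truncated Kozachenko-Leonenko estimator. -/
def tKL {d N : ℕ} (k : ℕ) (xs : Fin N → (Fin d → ℝ)) : ℝ :=
  - digamma k + digamma N + (1 / (N:ℝ)) * ∑ i : Fin N, ∑ j : Fin d, Real.log (xiTKL k xs i j)

/-- `ε_{i,j}`: twice the largest coordinate-`j` distance from `xs i` over its `k`
nearest neighbors (in sup-norm) among the other samples. -/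
def epsKSG {d N : ℕ} (k : ℕ) (xs : Fin N → (Fin d → ℝ)) (i : Fin N) (j : Fin d) : ℝ :=
  2 * sSup {t : ℝ | ∃ l : Fin N, l ≠ i ∧ dist (xs i) (xs l) ≤ kNNradiusLoo k xs i ∧ t = |xs i j - xs l j|}

/-- `ζ_{i,j} = min(x_j^{(i)} + ε_{i,j}/2, 1) - max(x_j^{(i)} - ε_{i,j}/2, 0)`. -/
def zetaTKSG {d N : ℕ} (k : ℕ) (xs : Fin N → (Fin d → ℝ)) (i : Fin N) (j : Fin d) : ℝ :=
  min (xs i j + epsKSG k xs i j / 2) 1 - max (xs i j - epsKSG k xs i j / 2) 0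

/-- The truncated KSG estimator. -/
def tKSG {d N : ℕ} (k : ℕ) (xs : Fin N → (Fin d → ℝ)) : ℝ :=
  - digamma k + digamma N + ((d:ℝ) - 1) / k
    + (1 / (N:ℝ)) * ∑ i : Fin N, ∑ j : Fin d, Real.log (zetaTKSG k xs i j)

/-- The rectangular (coordinate-wise) twice-`k`-NN distance `ε_k^{x_j}(x)` of a query
point `x`: twice the largest coordinate-`j` distance from `x` over its `k` nearest
neighbors (in the sup-norm) among the samples `s`. -/
def epsRect {d m : ℕ} (k : ℕ) (x : Fin d → ℝ) (s : Fin m → (Fin d → ℝ)) (j : Fin d) : ℝ :=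
  2 * sSup {t : ℝ | ∃ i : Fin m, dist x (s i) ≤ kNNradius k x s ∧ t = |x j - s i j|}

/-- The open axis-aligned rectangle `B(x; r_1, ..., r_d)`. -/
def rect {d : ℕ} (x r : Fin d → ℝ) : Set (Fin d → ℝ) := {x' | ∀ j, |x' j - x j| < r j}

/-- The truncated interval length `min(x_j + r/2, 1) - max(x_j - r/2, 0)`. -/
def truncLen {d : ℕ} (x : Fin d → ℝ) (r : ℝ) (j : Fin d) : ℝ :=
  min (x j + r / 2) 1 - max (x j - r / 2) 0

/-- The indicator `1_j`: equals `1` if `[x_j - r_j/2, x_j + r_j/2]` extends beyond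
`[0,1]` and `0` otherwise. -/
def indBeyond {d : ℕ} (x r : Fin d → ℝ) (j : Fin d) : ℕ :=
  if x j - r j / 2 < 0 ∨ 1 < x j + r j / 2 then 1 else 0

/-- The partial derivative of `f : (Fin d → ℝ) → ℝ` in coordinate `j`. -/
def pderiv {d : ℕ} (j : Fin d) (f : (Fin d → ℝ) → ℝ) : (Fin d → ℝ) → ℝ :=
  fun r => deriv (fun t => f (Function.update r j t)) (r j)

/-- Iterated mixed partial derivative along a list of coordinates. -/
def mixedPartial {d : ℕ} (l : List (Fin d)) (f : (Fin d → ℝ) → ℝ) : (Fin d → ℝ) → ℝ :=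
  l.foldr pderiv f

theorem Real.deriv_Gamma_add_one {x : ℝ} (hx : 0 < x) :
    deriv Real.Gamma (x + 1) = Real.Gamma x + x * deriv Real.Gamma x := by
  have hdiff : ∀ y : ℝ, 0 < y → DifferentiableAt ℝ Real.Gamma y := fun y hy =>
    Real.differentiableAt_Gamma fun m => by linarith [(Nat.cast_nonneg m : (0 : ℝ) ≤ m)]
  have hrec : (fun y => Real.Gamma (y + 1)) =ᶠ[𝓝 x] fun y => y * Real.Gamma y := by
    filter_upwards [eventually_gt_nhds hx] with y hy using Real.Gamma_add_one hy.ne'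
  have hshift : HasDerivAt (fun y => Real.Gamma (y + 1)) (deriv Real.Gamma (x + 1)) x := by
    simpa using (hdiff (x + 1) (by linarith)).hasDerivAt.comp_add_const x 1
  have hprod := ((hasDerivAt_id x).mul (hdiff x hx).hasDerivAt).congr_of_eventuallyEq hrec
  simpa using hshift.unique hprod

theorem digamma_add_one {x : ℝ} (hx : 0 < x) : digamma (x + 1) = digamma x + 1 / x := by
  have hG : Real.Gamma x ≠ 0 := (Real.Gamma_pos_of_pos hx).ne'
  rw [digamma, digamma, Real.deriv_Gamma_add_one hx, Real.Gamma_add_one hx.ne']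
  field_simp
  ring

theorem digamma_natCast_sub_natCast {k n : ℕ} (hk : 1 ≤ k) (hkn : k ≤ n) :
    digamma n - digamma k = ∑ j ∈ Finset.Ico k n, (1 : ℝ) / j := by
  induction n, hkn using Nat.le_induction with
  | base => simp
  | succ n hn ih =>
    have hn0 : (0 : ℝ) < n := by exact_mod_cast hk.trans hn
    rw [Nat.cast_succ, digamma_add_one hn0, Finset.sum_Ico_succ_top hn]
    linarith

open ProbabilityTheory in
theorem lintegral_pow_mul_one_sub_pow (a b : ℕ) :
    ∫⁻ x in Set.Ioo (0 : ℝ) 1, ENNReal.ofReal (x ^ a * (1 - x) ^ b)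
      = ENNReal.ofReal (a.factorial * b.factorial / (a + b + 1).factorial : ℝ) := by
  have hB : beta (a + 1) (b + 1) = a.factorial * b.factorial / (a + b + 1).factorial := by
    rw [beta, show ((a : ℝ) + 1 + (b + 1)) = ((a + b + 1 : ℕ) : ℝ) + 1 by push_cast; ring,
      Real.Gamma_nat_eq_factorial, Real.Gamma_nat_eq_factorial, Real.Gamma_nat_eq_factorial]
  have hpos : 0 < beta (a + 1) (b + 1) := beta_pos (by positivity) (by positivity)
  have hdensity : ∀ x ∈ Set.Ioo (0 : ℝ) 1,
      ENNReal.ofReal (1 / beta (a + 1) (b + 1) * x ^ ((a + 1 : ℝ) - 1) * (1 - x) ^ ((b + 1 : ℝ) - 1))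
        = ENNReal.ofReal (beta (a + 1) (b + 1))⁻¹ * ENNReal.ofReal (x ^ a * (1 - x) ^ b) :=
    fun x hx => by
      simp only [add_sub_cancel_right, Real.rpow_natCast]
      rw [← ENNReal.ofReal_mul (inv_nonneg.2 hpos.le), one_div, mul_assoc]
  have h := lintegral_betaPDF_eq_one (α := a + 1) (β := b + 1) (by positivity) (by positivity)
  rw [lintegral_betaPDF, setLIntegral_congr_fun measurableSet_Ioo hdensity,
    lintegral_const_mul _ (by fun_prop), ENNReal.ofReal_inv_of_pos hpos, mul_comm] at h
  rw [← hB, ENNReal.eq_inv_of_mul_eq_one_left h, inv_inv]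

theorem choose_mul_beta_eq_inv {j m : ℕ} (hj : 1 ≤ j) (hjm : j ≤ m) :
    (m.choose j : ℝ) * ((j - 1).factorial * (m - j).factorial / m.factorial) = 1 / j := by
  have hfac : (m.choose j * (j * (j - 1).factorial) * (m - j).factorial : ℝ) = m.factorial := by
    rw [← Nat.choose_mul_factorial_mul_factorial hjm, ← Nat.mul_factorial_pred (n := j) (by omega)]
    push_cast; ring
  have hj0 : (j : ℝ) ≠ 0 := by positivity
  field_simp
  linear_combination hfac

theorem lintegral_binomial_term_div {j m : ℕ} (hj : 1 ≤ j) (hjm : j ≤ m) :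
    ∫⁻ u in Set.Ioo (0 : ℝ) 1,
        (m.choose j : ℝ≥0∞) * ENNReal.ofReal u ^ j * ENNReal.ofReal (1 - u) ^ (m - j)
          / ENNReal.ofReal u
      = (j : ℝ≥0∞)⁻¹ := by
  have hcongr : ∀ u ∈ Set.Ioo (0 : ℝ) 1,
      (m.choose j : ℝ≥0∞) * ENNReal.ofReal u ^ j * ENNReal.ofReal (1 - u) ^ (m - j)
          / ENNReal.ofReal u
        = m.choose j * ENNReal.ofReal (u ^ (j - 1) * (1 - u) ^ (m - j)) := by
    rintro u ⟨hu0, hu1⟩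
    have hu : ENNReal.ofReal u ≠ 0 := by simpa using hu0
    obtain ⟨i, rfl⟩ : ∃ i, j = i + 1 := ⟨j - 1, by omega⟩
    rw [ENNReal.ofReal_mul (by positivity), ENNReal.ofReal_pow hu0.le,
      ENNReal.ofReal_pow (by linarith), pow_succ', Nat.add_sub_cancel, ENNReal.div_eq_inv_mul]
    calc (ENNReal.ofReal u)⁻¹ * (m.choose (i + 1) * (ENNReal.ofReal u * ENNReal.ofReal u ^ i)
          * ENNReal.ofReal (1 - u) ^ (m - (i + 1)))
        = ((ENNReal.ofReal u)⁻¹ * ENNReal.ofReal u) * (m.choose (i + 1) * (ENNReal.ofReal u ^ i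
          * ENNReal.ofReal (1 - u) ^ (m - (i + 1)))) := by ring
      _ = _ := by rw [ENNReal.inv_mul_cancel hu ENNReal.ofReal_ne_top, one_mul]
  rw [setLIntegral_congr_fun measurableSet_Ioo hcongr, lintegral_const_mul _ (by fun_prop),
    lintegral_pow_mul_one_sub_pow, show j - 1 + (m - j) + 1 = m by omega,
    ← ENNReal.ofReal_natCast, ← ENNReal.ofReal_mul (by positivity), choose_mul_beta_eq_inv hj hjm,
    one_div, ENNReal.ofReal_inv_of_pos (by positivity), ENNReal.ofReal_natCast]

theorem ofReal_neg_log_eq_lintegral {y : ℝ} (hy0 : 0 < y) (hy1 : y ≤ 1) :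
    ENNReal.ofReal (-Real.log y)
      = ∫⁻ u in Set.Ioo (0 : ℝ) 1, (Set.Ici y).indicator (fun u => (ENNReal.ofReal u)⁻¹) u := by
  have hset : Set.Ici y ∩ Set.Ioo 0 1 = Set.Ico y 1 := by
    ext u
    simp only [Set.mem_inter_iff, Set.mem_Ici, Set.mem_Ioo, Set.mem_Ico]
    constructor <;> intro h <;> refine ⟨h.1, ?_⟩ <;> grind
  have hint : IntegrableOn (fun u : ℝ => u⁻¹) (Set.Ioc y 1) :=
    (continuousOn_inv₀.mono fun u hu => (hy0.trans_le hu.1).ne').integrableOn_Icc.mono_set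
      Set.Ioc_subset_Icc_self
  rw [lintegral_indicator measurableSet_Ici, Measure.restrict_restrict measurableSet_Ici, hset,
    Measure.restrict_congr_set Ico_ae_eq_Ioc,
    setLIntegral_congr_fun measurableSet_Ioc fun u hu =>
      (ENNReal.ofReal_inv_of_pos (hy0.trans hu.1)).symm,
    ← ofReal_integral_eq_lintegral_ofReal hint
      (ae_restrict_of_forall_mem measurableSet_Ioc fun u hu => (inv_pos.2 (hy0.trans hu.1)).le),
    ← intervalIntegral.integral_of_le hy1, integral_inv (by grind [Set.mem_uIcc]), one_div,
    Real.log_inv]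

theorem integral_log_eq_neg_lintegral_meas_le_div {Ω : Type*} [MeasurableSpace Ω]
    {μ : Measure Ω} [SFinite μ] {Y : Ω → ℝ} (hY : Measurable Y) (hpos : ∀ᵐ ω ∂μ, 0 < Y ω)
    (hle : ∀ ω, Y ω ≤ 1) :
    ∫ ω, Real.log (Y ω) ∂μ
      = -(∫⁻ u in Set.Ioo (0 : ℝ) 1, μ {ω | Y ω ≤ u} / ENNReal.ofReal u).toReal := by
  have hlog : ∫ ω, Real.log (Y ω) ∂μ = -(∫⁻ ω, ENNReal.ofReal (-Real.log (Y ω)) ∂μ).toReal := by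
    rw [← integral_eq_lintegral_of_nonneg_ae
        (hpos.mono fun ω hω => neg_nonneg.2 (Real.log_nonpos hω.le (hle ω)))
        (hY.log.neg.aestronglyMeasurable), integral_neg, neg_neg]
  have hmeas : Measurable (Function.uncurry fun ω u =>
      (Set.Ici (Y ω)).indicator (fun u : ℝ => (ENNReal.ofReal u)⁻¹) u) :=
    (measurable_snd.ennreal_ofReal.inv).indicator
      (measurableSet_le (hY.comp measurable_fst) measurable_snd)
  rw [hlog, lintegral_congr_ae (hpos.mono fun ω hω => ofReal_neg_log_eq_lintegral hω (hle ω)),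
    lintegral_lintegral_swap hmeas.aemeasurable]
  congr 3 with u
  have hind : (fun ω => (Set.Ici (Y ω)).indicator (fun u : ℝ => (ENNReal.ofReal u)⁻¹) u)
      = {ω | Y ω ≤ u}.indicator fun _ => (ENNReal.ofReal u)⁻¹ := by
    ext ω; simp [Set.indicator_apply]
  rw [hind, lintegral_indicator_const (measurableSet_le hY measurable_const), div_eq_mul_inv,
    mul_comm]

theorem integral_log_eq_neg_sum_one_div {Ω : Type*} [MeasurableSpace Ω] {μ : Measure Ω}
    [SFinite μ] {Y : Ω → ℝ} {k m : ℕ} (hk : 1 ≤ k) (hY : Measurable Y) (hle : ∀ ω, Y ω ≤ 1)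
    (hlaw : ∀ u, 0 ≤ u → u < 1 → μ {ω | Y ω ≤ u} = ∑ j ∈ Finset.Icc k m,
      (m.choose j : ℝ≥0∞) * ENNReal.ofReal u ^ j * ENNReal.ofReal (1 - u) ^ (m - j)) :
    ∫ ω, Real.log (Y ω) ∂μ = -∑ j ∈ Finset.Icc k m, (1 : ℝ) / j := by
  have hpos : ∀ᵐ ω ∂μ, 0 < Y ω := by
    simp only [ae_iff, not_lt]
    rw [hlaw 0 le_rfl one_pos]
    exact Finset.sum_eq_zero fun j hj => by simp [show j ≠ 0 by grind]
  rw [integral_log_eq_neg_lintegral_meas_le_div hY hpos hle,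
    setLIntegral_congr_fun measurableSet_Ioo fun u hu => by
      rw [hlaw u hu.1.le hu.2, div_eq_mul_inv, Finset.sum_mul]]
  simp only [← div_eq_mul_inv]
  rw [lintegral_finsetSum _ fun j _ => by fun_prop,
    Finset.sum_congr rfl fun j hj => lintegral_binomial_term_div
      (hk.trans (Finset.mem_Icc.1 hj).1) (Finset.mem_Icc.1 hj).2,
    ENNReal.toReal_sum fun j hj => ENNReal.inv_ne_top.2 (by simp; grind)]
  simp [one_div]

section Binomial

variable {ι α : Type*} [Fintype ι] {A : Set α}

theorem setOf_filter_mem_eq_pi (S : Finset ι) :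
    {s : ι → α | Finset.univ.filter (fun i => s i ∈ A) = S}
      = Set.univ.pi fun i => if i ∈ S then A else Aᶜ := by
  ext s
  simp only [Set.mem_ofPred_eq, Finset.ext_iff, Finset.mem_filter, Finset.mem_univ, true_and,
    Set.mem_pi, Set.mem_univ, forall_const]
  refine forall_congr' fun i => ?_
  split_ifs with hi <;> simp [hi]

theorem setOf_le_card_filter_mem_eq_biUnion (k : ℕ) :
    {s : ι → α | k ≤ (Finset.univ.filter fun i => s i ∈ A).card}
      = ⋃ S ∈ Finset.univ.filter (fun S : Finset ι => k ≤ S.card),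
          {s | Finset.univ.filter (fun i => s i ∈ A) = S} := by
  ext s
  simp

variable [MeasurableSpace α]

theorem measurableSet_setOf_filter_mem_eq (hA : MeasurableSet A) (S : Finset ι) :
    MeasurableSet {s : ι → α | Finset.univ.filter (fun i => s i ∈ A) = S} := by
  rw [setOf_filter_mem_eq_pi]
  exact .univ_pi fun i => by split_ifs; exacts [hA, hA.compl]

theorem measurableSet_le_card_filter_mem (hA : MeasurableSet A) (k : ℕ) :
    MeasurableSet {s : ι → α | k ≤ (Finset.univ.filter fun i => s i ∈ A).card} := by
  rw [setOf_le_card_filter_mem_eq_biUnion]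
  exact Finset.measurableSet_biUnion _ fun S _ => measurableSet_setOf_filter_mem_eq hA S

variable (P : Measure α) [IsProbabilityMeasure P]

theorem measure_pi_setOf_filter_mem_eq (hA : MeasurableSet A) (S : Finset ι) :
    Measure.pi (fun _ : ι => P) {s | Finset.univ.filter (fun i => s i ∈ A) = S}
      = P A ^ S.card * (1 - P A) ^ (Fintype.card ι - S.card) := by
  rw [setOf_filter_mem_eq_pi, Measure.pi_pi]
  simp_rw [apply_ite P, prob_compl_eq_one_sub hA]
  rw [Finset.prod_ite, Finset.prod_const, Finset.prod_const, Finset.filter_mem_eq_inter,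
    Finset.univ_inter, Finset.filter_not, Finset.filter_mem_eq_inter, Finset.univ_inter,
    Finset.card_sdiff_of_subset (Finset.subset_univ S), Finset.card_univ]

theorem measure_pi_le_card_filter_mem (hA : MeasurableSet A) (k : ℕ) :
    Measure.pi (fun _ : ι => P) {s | k ≤ (Finset.univ.filter fun i => s i ∈ A).card}
      = ∑ j ∈ Finset.Icc k (Fintype.card ι),
          ((Fintype.card ι).choose j : ℝ≥0∞) * P A ^ j * (1 - P A) ^ (Fintype.card ι - j) := by
  rw [setOf_le_card_filter_mem_eq_biUnion, measure_biUnion_finset]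
  · simp_rw [measure_pi_setOf_filter_mem_eq P hA]
    rw [Finset.sum_filter, ← Finset.powerset_univ, Finset.sum_powerset_apply_card
      (fun j => if k ≤ j then P A ^ j * (1 - P A) ^ (Fintype.card ι - j) else 0),
      Finset.card_univ]
    simp only [smul_ite, smul_zero, nsmul_eq_mul, ← mul_assoc]
    rw [← Finset.sum_filter]
    congr 1
    ext j
    simp only [Finset.mem_filter, Finset.mem_range, Finset.mem_Icc]
    omega
  · exact fun S _ S' _ h => Disjoint.preimage _ (Set.disjoint_singleton.2 h)
  · exact fun S _ => measurableSet_setOf_filter_mem_eq hA S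

end Binomial

section NearestNeighbor

variable {d m k : ℕ}

theorem kNNradius_le_iff (hkm : k ≤ m) (x : Fin d → ℝ) (s : Fin m → Fin d → ℝ) {r : ℝ} :
    kNNradius k x s ≤ r
      ↔ 0 ≤ r ∧ k ≤ (Finset.univ.filter fun i => dist x (s i) ≤ r).card := by
  set C : ℝ → ℕ := fun r => (Finset.univ.filter fun i => dist x (s i) ≤ r).card
  have hmono : Monotone C := fun r r' h =>
    Finset.card_le_card (Finset.monotone_filter_right _ fun _ _ => (le_trans · h))
  -- `C` is a finite sum of indicators of closed half-lines, hence upper semicontinuous.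
  have hclosed : IsClosed {r | 0 ≤ r ∧ k ≤ C r} := by
    refine isClosed_Ici.inter (UpperSemicontinuous.isClosed_preimage ?_ k)
    simp only [C, Finset.card_filter]
    exact upperSemicontinuous_sum fun i _ =>
      isClosed_Ici.upperSemicontinuous_indicator (s := Set.Ici (dist x (s i))) zero_le_one
  have hne : {r | 0 ≤ r ∧ k ≤ C r}.Nonempty := by
    refine ⟨∑ i, dist x (s i), by positivity, hkm.trans_eq ?_⟩
    dsimp only [C]
    rw [Finset.filter_true_of_mem fun i _ => Finset.single_le_sum (fun j _ => dist_nonneg)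
      (Finset.mem_univ i), Finset.card_univ, Fintype.card_fin]
  have hmem := hclosed.csInf_mem hne ⟨0, fun _ h => h.1⟩
  exact ⟨fun h => ⟨hmem.1.trans h, hmem.2.trans (hmono h)⟩, fun h => csInf_le ⟨0, fun _ h => h.1⟩ h⟩

theorem setOf_kNNradius_le (hkm : k ≤ m) (x : Fin d → ℝ) {r : ℝ} (hr : 0 ≤ r) :
    {s : Fin m → Fin d → ℝ | kNNradius k x s ≤ r}
      = {s | k ≤ (Finset.univ.filter fun i => s i ∈ Metric.closedBall x r).card} := by
  ext s
  simp [kNNradius_le_iff hkm, hr, Metric.mem_closedBall, dist_comm]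

theorem measurable_kNNradius (hkm : k ≤ m) (x : Fin d → ℝ) :
    Measurable fun s : Fin m → Fin d → ℝ => kNNradius k x s := by
  refine measurable_of_Iic fun r => ?_
  rcases le_or_gt 0 r with hr | hr
  · change MeasurableSet {s | kNNradius k x s ≤ r}
    rw [setOf_kNNradius_le hkm x hr]
    exact measurableSet_le_card_filter_mem Metric.isClosed_closedBall.measurableSet k
  · convert MeasurableSet.empty
    ext s
    simp only [Set.mem_preimage, Set.mem_Iic, kNNradius_le_iff hkm, Set.mem_empty_iff_false,
      iff_false, not_and]
    intro h
    linarith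

end NearestNeighbor

section Distribution

open ProbabilityTheory

theorem continuous_cdf (μ : Measure ℝ) [IsProbabilityMeasure μ] [NullSingletonClass μ] :
    Continuous (cdf μ) := by
  refine continuous_iff_continuousAt.2 fun a => ?_
  have hleft : Function.leftLim (cdf μ) a = cdf μ a := by
    have h := (cdf μ).measure_singleton a
    rw [measure_cdf, measure_singleton, eq_comm, ENNReal.ofReal_eq_zero, sub_nonpos] at h
    exact le_antisymm ((monotone_cdf μ).leftLim_le le_rfl) h
  rw [(monotone_cdf μ).continuousAt_iff_leftLim_eq_rightLim, hleft, StieltjesFunction.rightLim_eq]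

theorem Monotone.exists_preimage_Iic_eq_Iic {F : ℝ → ℝ} (hmono : Monotone F)
    (hcont : Continuous F) {u a b : ℝ} (ha : F a ≤ u) (hb : u < F b) :
    ∃ t, F t = u ∧ F ⁻¹' Set.Iic u = Set.Iic t := by
  have hbdd : BddAbove (F ⁻¹' Set.Iic u) :=
    ⟨b, fun r hr => (hmono.reflect_lt ((Set.mem_Iic.1 hr).trans_lt hb)).le⟩
  have hne : (F ⁻¹' Set.Iic u).Nonempty := ⟨a, ha⟩
  have ht : F (sSup (F ⁻¹' Set.Iic u)) ≤ u :=
    (isClosed_Iic.preimage hcont).csSup_mem hne hbdd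
  obtain ⟨c, hc⟩ := intermediate_value_univ a b hcont ⟨ha, hb.le⟩
  refine ⟨_, le_antisymm ht (hc.symm.le.trans (hmono (le_csSup hbdd hc.le))),
    Set.ext fun r => ⟨fun hr => le_csSup hbdd hr, fun hr => (hmono hr).trans ht⟩⟩

theorem measure_pi_ball_kNNradius_le {d m k : ℕ} (hkm : k ≤ m) {P : Measure (Fin d → ℝ)}
    [IsProbabilityMeasure P] {x : Fin d → ℝ} (hsphere : ∀ r, P (Metric.sphere x r) = 0)
    {u : ℝ} (hu0 : 0 ≤ u) (hu1 : u < 1) :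
    Measure.pi (fun _ : Fin m => P) {s | (P (Metric.ball x (kNNradius k x s))).toReal ≤ u}
      = ∑ j ∈ Finset.Icc k m,
          (m.choose j : ℝ≥0∞) * ENNReal.ofReal u ^ j * ENNReal.ofReal (1 - u) ^ (m - j) := by
  have hdist : Measurable fun y => dist y x := measurable_id.dist measurable_const
  set ν := P.map fun y => dist y x
  have : IsProbabilityMeasure ν := Measure.isProbabilityMeasure_map hdist.aemeasurable
  have : NullSingletonClass ν := ⟨fun r => by
    rw [Measure.map_apply hdist (measurableSet_singleton r)]
    exact hsphere r⟩
  have hclosedBall : ∀ r, P (Metric.closedBall x r) = P (Metric.ball x r) := fun r => by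
    rw [← Metric.closedBall_sdiff_sphere, measure_sdiff_null (hsphere r)]
  have hF : ∀ r, cdf ν r = (P (Metric.ball x r)).toReal := fun r => by
    rw [cdf_eq_real, measureReal_def, Measure.map_apply hdist measurableSet_Iic, ← hclosedBall]
    rfl
  have hF0 : cdf ν 0 ≤ u := by simpa [hF] using hu0
  obtain ⟨b, hb⟩ := ((tendsto_cdf_atTop ν).eventually (lt_mem_nhds hu1)).exists
  obtain ⟨t, htu, hpre⟩ := (monotone_cdf ν).exists_preimage_Iic_eq_Iic
    (continuous_cdf ν) hF0 hb
  have ht0 : 0 ≤ t := Set.mem_Iic.1 (hpre ▸ hF0)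
  have hset : {s : Fin m → Fin d → ℝ | (P (Metric.ball x (kNNradius k x s))).toReal ≤ u}
      = {s | kNNradius k x s ≤ t} := by
    ext s
    simpa [hF] using Set.ext_iff.1 hpre (kNNradius k x s)
  have hmass : P (Metric.closedBall x t) = ENNReal.ofReal u := by
    rw [hclosedBall, ← htu, hF, ENNReal.ofReal_toReal (measure_ne_top P _)]
  rw [hset, setOf_kNNradius_le hkm x ht0,
    measure_pi_le_card_filter_mem P Metric.isClosed_closedBall.measurableSet, Fintype.card_fin,
    hmass, ENNReal.ofReal_sub _ hu0, ENNReal.ofReal_one]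

theorem measurable_measure_ball_kNNradius {d m k : ℕ} (hkm : k ≤ m) (P : Measure (Fin d → ℝ))
    [IsFiniteMeasure P] (x : Fin d → ℝ) :
    Measurable fun s : Fin m → Fin d → ℝ => (P (Metric.ball x (kNNradius k x s))).toReal :=
  (Monotone.measurable fun _ _ h => ENNReal.toReal_mono (measure_ne_top P _)
    (measure_mono (Metric.ball_subset_ball h))).comp (measurable_kNNradius hkm x)

end Distribution

theorem knn_ball_mass_expectation_general {d k N : ℕ} (hd : 1 ≤ d) (hk : 1 ≤ k)
    (hkN : k ≤ N - 1)
    (P : Measure (Fin d → ℝ)) [IsProbabilityMeasure P]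
    (p : (Fin d → ℝ) → ℝ)
    (hdens : P = volume.withDensity fun x => ENNReal.ofReal (p x))
    (x : Fin d → ℝ) :
    (∫ s, Real.log ((P (Metric.ball x (twiceKNNdist k x s / 2))).toReal)
        ∂(Measure.pi fun _ : Fin (N - 1) => P))
      = digamma k - digamma N := by
  have : Nonempty (Fin d) := ⟨⟨0, hd⟩⟩
  have hsphere (r : ℝ) : P (Metric.sphere x r) = 0 :=
    hdens ▸ withDensity_absolutelyContinuous _ _ (Measure.addHaar_sphere volume x r)
  have htwice (s : Fin (N - 1) → Fin d → ℝ) : twiceKNNdist k x s / 2 = kNNradius k x s := by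
    simp [twiceKNNdist]
  simp only [htwice]
  rw [integral_log_eq_neg_sum_one_div hk (measurable_measure_ball_kNNradius hkN P x)
      (fun _ => measureReal_le_one) fun _ => measure_pi_ball_kNNradius_le hkN hsphere,
    ← neg_sub, digamma_natCast_sub_natCast hk (by omega : k ≤ N),
    Finset.Icc_sub_one_right_eq_Ico_of_not_isMin (by simp; omega)]

/-- Lemma 1: for a query point `x` in the support of the continuous density `p` of `P`,
the mass `p_{ε_k(x)}(x)` of the sup-norm ball of radius `ε_k(x)/2` around `x`, where
`ε_k(x)` is twice the `k`-NN distance among `N-1` i.i.d. samples from `P`, satisfies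
`E[log p_{ε_k(x)}(x)] = ψ(k) - ψ(N)`. -/
theorem knn_ball_mass_expectation {d k N : ℕ} (hd : 1 ≤ d) (hk : 1 ≤ k)
    (hN : 2 ≤ N) (hkN : k ≤ N - 1)
    (P : Measure (Fin d → ℝ)) [IsProbabilityMeasure P]
    (p : (Fin d → ℝ) → ℝ)
    (hdens : P = volume.withDensity fun x => ENNReal.ofReal (p x))
    (hcont : Continuous p)
    (x : Fin d → ℝ) (hx : x ∈ Function.support p) :
    (∫ s, Real.log ((P (Metric.ball x (twiceKNNdist k x s / 2))).toReal)
        ∂(Measure.pi fun _ : Fin (N - 1) => P))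
      = digamma k - digamma N :=
  knn_ball_mass_expectation_general hd hk hkN P p hdens x
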